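/- In the discrete strip setup with μ = 0 (cylindrical case), assume s₁·s₂·s₃ ≠ 0, t₁·t₂·t₃ ≠ 0, (s₁² − 1)·(t₁² − 1) ≠ 0, and that R₂ = 0 and R₃ = 0, where Rᵢ := s₁²sᵢt₁tᵢ² − s₁sᵢ²t₁²tᵢ − s₁²sᵢt₁ + s₁sᵢ²tᵢ + s₁t₁²tᵢ − sᵢt₁tᵢ² − s₁tᵢ + sᵢt₁ for i ∈ {2, 3}. Then for all δ₁, δ₂ ∈ ℝ, D₁(δ₁, δ₂) = 0 implies D₂(δ₁, δ₂) = 0. -/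

import Mathlib

/-!
For `μ = 0` the determinant `D` equals `sin θ₁ sin θ₂ sin θ₃` times a linear form in
`(cot θ₁, cot θ₂, cot θ₃)` whose coefficients depend only on `δ₁, δ₂`. Since
`cot θ = (1 - s²) / (2 s)` for `s = tan (θ / 2)`, the conditions `R₂ = R₃ = 0` say that the
cotangent triple of the `τ`'s is proportional to that of the `σ`'s, so the linear form vanishes
on one triple whenever it vanishes on the other.
-/

open Real Matrix

noncomputable section

/-- Rotation matrix about the `x`-axis by angle `δ`. -/
def rotX (δ : ℝ) : Matrix (Fin 3) (Fin 3) ℝ :=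
  !![1, 0, 0;
     0, Real.cos δ, -Real.sin δ;
     0, Real.sin δ, Real.cos δ]

/-- Rotation matrix by angle `δ` about the line through the origin with direction
`(cos μ, sin μ, 0)`. -/
def rotAxis (μ δ : ℝ) : Matrix (Fin 3) (Fin 3) ℝ :=
  !![(1 - Real.cos μ ^ 2) * Real.cos δ + Real.cos μ ^ 2,
       Real.cos μ * Real.sin μ * (1 - Real.cos δ),
       Real.sin μ * Real.sin δ;
     Real.cos μ * Real.sin μ * (1 - Real.cos δ),
       (1 - Real.sin μ ^ 2) * Real.cos δ + Real.sin μ ^ 2,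
       -(Real.cos μ * Real.sin δ);
     -(Real.sin μ * Real.sin δ),
       Real.cos μ * Real.sin δ,
       Real.cos δ]

/-- The unit vector `(cos θ, sin θ, 0)` in the `xy`-plane. -/
def dirVec (θ : ℝ) : Fin 3 → ℝ := ![Real.cos θ, Real.sin θ, 0]

/-- Coplanarity determinant of the three cut edge directions `R₁·(cos θ₁, sin θ₁, 0)`,
`(cos θ₂, sin θ₂, 0)`, `R₂·(cos (μ+θ₃), sin (μ+θ₃), 0)`. -/
def Ddet (μ δ₁ δ₂ θ₁ θ₂ θ₃ : ℝ) : ℝ :=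
  Matrix.det (Matrix.of
    ![(rotX δ₁).mulVec (dirVec θ₁),
      dirVec θ₂,
      (rotAxis μ δ₂).mulVec (dirVec (μ + θ₃))])

def cylindricalForm (δ₁ δ₂ a₁ a₂ a₃ : ℝ) : ℝ :=
  a₁ * sin δ₂ - a₂ * sin (δ₂ - δ₁) - a₃ * sin δ₁

lemma Ddet_zero_eq (δ₁ δ₂ θ₁ θ₂ θ₃ : ℝ) :
    Ddet 0 δ₁ δ₂ θ₁ θ₂ θ₃ =
      sin δ₂ * sin θ₃ * (cos θ₁ * sin θ₂ - cos θ₂ * sin θ₁ * cos δ₁) +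
        sin θ₁ * sin δ₁ * (cos θ₂ * sin θ₃ * cos δ₂ - cos θ₃ * sin θ₂) := by
  simp only [Ddet, rotX, rotAxis, dirVec, det_fin_three, mulVec_cons, mulVec_empty, zero_smul,
    add_zero, cos_zero, sin_zero, one_pow, sub_self, zero_mul, zero_add, mul_zero, ne_eq,
    OfNat.ofNat_ne_zero, not_false_eq_true, zero_pow, sub_zero, one_mul, neg_zero, of_apply,
    cons_val', Pi.add_apply, Pi.smul_apply, Function.comp_apply, cons_val_zero, head_cons,
    smul_eq_mul, mul_one, tail_cons, cons_val_fin_one, cons_val_one, cons_val, Fin.isValue]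
  ring

lemma Ddet_zero_eq_mul_cylindricalForm {θ₁ θ₂ θ₃ : ℝ} (h₁ : sin θ₁ ≠ 0) (h₂ : sin θ₂ ≠ 0)
    (h₃ : sin θ₃ ≠ 0) (δ₁ δ₂ : ℝ) :
    Ddet 0 δ₁ δ₂ θ₁ θ₂ θ₃ =
      sin θ₁ * sin θ₂ * sin θ₃ * cylindricalForm δ₁ δ₂ (cot θ₁) (cot θ₂) (cot θ₃) := by
  rw [Ddet_zero_eq, cylindricalForm, cot_eq_cos_div_sin, cot_eq_cos_div_sin, cot_eq_cos_div_sin,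
    sin_sub]
  field_simp
  ring

lemma cylindricalForm_eq_zero_of_proportional {δ₁ δ₂ a₁ a₂ a₃ b₁ b₂ b₃ : ℝ} (ha₁ : a₁ ≠ 0)
    (h₂ : a₁ * b₂ = a₂ * b₁) (h₃ : a₁ * b₃ = a₃ * b₁)
    (ha : cylindricalForm δ₁ δ₂ a₁ a₂ a₃ = 0) :
    cylindricalForm δ₁ δ₂ b₁ b₂ b₃ = 0 := by
  unfold cylindricalForm at *
  refine (mul_eq_zero.mp ?_).resolve_left ha₁
  linear_combination b₁ * ha - sin (δ₂ - δ₁) * h₂ - sin δ₁ * h₃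

lemma sin_ne_zero_of_tan_half_ne_zero {θ : ℝ} (h : tan (θ / 2) ≠ 0) : sin θ ≠ 0 := by
  rw [sin_eq_two_mul_tan_half_div_one_add_tan_half_sq]
  positivity

lemma cot_eq_of_tan_half_ne_zero {θ : ℝ} (h : tan (θ / 2) ≠ 0) :
    cot θ = (1 - tan (θ / 2) ^ 2) / (2 * tan (θ / 2)) := by
  have hsin := sin_ne_zero_of_tan_half_ne_zero h
  have hcos : cos θ ≠ -1 := fun hc ↦ hsin (sin_eq_zero_iff_cos_eq.mpr (Or.inr hc))
  rw [cot_eq_cos_div_sin, cos_eq_two_mul_tan_half_div_one_sub_tan_half_sq θ hcos,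
    sin_eq_two_mul_tan_half_div_one_add_tan_half_sq]
  field_simp

/-- The paper's `Rᵢ` is `halfAngleCross s₁ sᵢ t₁ tᵢ`. With `s = tan (σ / 2)` etc. it equals
`4 s s' t t' (cot σ cot τ' - cot σ' cot τ)`, since `cot θ = (1 - s²) / (2 s)`. -/
def halfAngleCross (s s' t t' : ℝ) : ℝ :=
  s ^ 2 * s' * t * t' ^ 2 - s * s' ^ 2 * t ^ 2 * t' - s ^ 2 * s' * t +
    s * s' ^ 2 * t' + s * t ^ 2 * t' - s' * t * t' ^ 2 - s * t' + s' * t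

lemma cot_mul_cot_eq_of_halfAngleCross_eq_zero {σ σ' τ τ' : ℝ} (hσ : tan (σ / 2) ≠ 0)
    (hσ' : tan (σ' / 2) ≠ 0) (hτ : tan (τ / 2) ≠ 0) (hτ' : tan (τ' / 2) ≠ 0)
    (h : halfAngleCross (tan (σ / 2)) (tan (σ' / 2)) (tan (τ / 2)) (tan (τ' / 2)) = 0) :
    cot σ * cot τ' = cot σ' * cot τ := by
  rw [cot_eq_of_tan_half_ne_zero hσ, cot_eq_of_tan_half_ne_zero hσ',
    cot_eq_of_tan_half_ne_zero hτ, cot_eq_of_tan_half_ne_zero hτ']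
  rw [halfAngleCross] at h
  field_simp
  linear_combination h

/-- In the cylindrical case `μ = 0`: if `R₂ = 0` and `R₃ = 0` (and the
stated nondegeneracy assumptions hold), then every folding with coplanar first cut polygon
also keeps the second cut polygon coplanar: `D₁ = 0` implies `D₂ = 0`. -/
theorem discrete_cylinder_sufficient_condition
    (σ₁ σ₂ σ₃ τ₁ τ₂ τ₃ s₁ s₂ s₃ t₁ t₂ t₃ : ℝ)
    (hs₁ : s₁ = Real.tan (σ₁ / 2)) (hs₂ : s₂ = Real.tan (σ₂ / 2))
    (hs₃ : s₃ = Real.tan (σ₃ / 2))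
    (ht₁ : t₁ = Real.tan (τ₁ / 2)) (ht₂ : t₂ = Real.tan (τ₂ / 2))
    (ht₃ : t₃ = Real.tan (τ₃ / 2))
    (hs0 : s₁ * s₂ * s₃ ≠ 0) (ht0 : t₁ * t₂ * t₃ ≠ 0)
    (h1 : (s₁ ^ 2 - 1) * (t₁ ^ 2 - 1) ≠ 0)
    (hR₂ : s₁ ^ 2 * s₂ * t₁ * t₂ ^ 2 - s₁ * s₂ ^ 2 * t₁ ^ 2 * t₂ - s₁ ^ 2 * s₂ * t₁ +
      s₁ * s₂ ^ 2 * t₂ + s₁ * t₁ ^ 2 * t₂ - s₂ * t₁ * t₂ ^ 2 - s₁ * t₂ + s₂ * t₁ = 0)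
    (hR₃ : s₁ ^ 2 * s₃ * t₁ * t₃ ^ 2 - s₁ * s₃ ^ 2 * t₁ ^ 2 * t₃ - s₁ ^ 2 * s₃ * t₁ +
      s₁ * s₃ ^ 2 * t₃ + s₁ * t₁ ^ 2 * t₃ - s₃ * t₁ * t₃ ^ 2 - s₁ * t₃ + s₃ * t₁ = 0) :
    ∀ δ₁ δ₂ : ℝ, Ddet 0 δ₁ δ₂ σ₁ σ₂ σ₃ = 0 → Ddet 0 δ₁ δ₂ τ₁ τ₂ τ₃ = 0 := by
  intro δ₁ δ₂ hD
  subst hs₁ hs₂ hs₃ ht₁ ht₂ ht₃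
  simp only [ne_eq, mul_eq_zero, not_or] at hs0 ht0
  obtain ⟨⟨hs₁0, hs₂0⟩, hs₃0⟩ := hs0
  obtain ⟨⟨ht₁0, ht₂0⟩, ht₃0⟩ := ht0
  have hsin := fun {θ} (h : tan (θ / 2) ≠ 0) ↦ sin_ne_zero_of_tan_half_ne_zero h
  rw [Ddet_zero_eq_mul_cylindricalForm (hsin hs₁0) (hsin hs₂0) (hsin hs₃0), mul_eq_zero,
    or_iff_right (mul_ne_zero (mul_ne_zero (hsin hs₁0) (hsin hs₂0)) (hsin hs₃0))] at hD
  rw [Ddet_zero_eq_mul_cylindricalForm (hsin ht₁0) (hsin ht₂0) (hsin ht₃0)]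
  refine mul_eq_zero_of_right _ (cylindricalForm_eq_zero_of_proportional ?_
    (cot_mul_cot_eq_of_halfAngleCross_eq_zero hs₁0 hs₂0 ht₁0 ht₂0 hR₂)
    (cot_mul_cot_eq_of_halfAngleCross_eq_zero hs₁0 hs₃0 ht₁0 ht₃0 hR₃) hD)
  have hσ₁ : 1 - tan (σ₁ / 2) ^ 2 ≠ 0 := fun h ↦
    h1 (by linear_combination -(tan (τ₁ / 2) ^ 2 - 1) * h)
  rw [cot_eq_of_tan_half_ne_zero hs₁0]
  exact div_ne_zero hσ₁ (mul_ne_zero two_ne_zero hs₁0)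

end
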